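/- Let α be a simple root and β₁, …, β_m (m ≥ 1) and γ₀, γ₁ positive roots in a crystallographic root system such that α + ∑_{i=1}^m β_i = γ₀ + γ₁ is a positive root. Then there exist a subset {i₁, …, i_k} of {1, …, m} and some t ∈ {0,1} such that ∑_{j=1}^k β_{i_j} − γ_t is a positive root or zero. -/

import Mathlib

/-!
Pair a summand of `α + ∑ βᵢ = γ₀ + γ₁` with one of the `γₜ` against which it has positive inner
product; one exists because `⟪γ₀ + γ₁, γ₀ + γ₁⟫ > 0`. By the crystallographic condition their
difference is a positive root, zero, or a negative root. If the summand is `α`, simplicity forces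
`γₜ - α = ∑ βᵢ - γ₁₋ₜ` to be a positive root or zero. If it is `βᵢ`, either `βᵢ - γₜ` already
answers the question, or `γₜ - βᵢ` is a positive root and `α + ∑_{j ≠ i} βⱼ = (γₜ - βᵢ) + γ₁₋ₜ`
is a shorter instance of the same problem.
-/

open scoped RealInnerProductSpace

def positiveRoots {V : Type*} [AddCommGroup V] [Module ℝ V] (Rt : Set V) (f : V →ₗ[ℝ] ℝ) :
    Set V :=
  {β ∈ Rt | 0 < f β}

section

variable {V ι : Type*} [NormedAddCommGroup V] [InnerProductSpace ℝ V] {Rt : Set V}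
  {f : V →ₗ[ℝ] ℝ}

theorem sub_mem_positiveRoots_or_sub_eq_zero_or_sub_mem (hneg : ∀ β ∈ Rt, -β ∈ Rt)
    (hcrys : ∀ β ∈ Rt, ∀ γ ∈ Rt, 0 < (inner ℝ β γ : ℝ) → β - γ ∈ Rt ∨ β - γ = 0)
    (hf : ∀ β ∈ Rt, f β ≠ 0) {β γ : V} (hβ : β ∈ Rt) (hγ : γ ∈ Rt) (hβγ : 0 < ⟪β, γ⟫) :
    β - γ ∈ positiveRoots Rt f ∨ β - γ = 0 ∨ γ - β ∈ positiveRoots Rt f := by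
  rcases hcrys β hβ γ hγ hβγ with hroot | hzero
  · rcases (hf _ hroot).lt_or_gt with hlt | hgt
    · refine Or.inr (Or.inr ⟨by simpa using hneg _ hroot, ?_⟩)
      rw [map_sub] at hlt ⊢
      linarith
    · exact Or.inl ⟨hroot, hgt⟩
  · exact Or.inr (Or.inl hzero)

theorem sub_mem_positiveRoots_or_sub_eq_zero_of_simple (hneg : ∀ β ∈ Rt, -β ∈ Rt)
    (hcrys : ∀ β ∈ Rt, ∀ γ ∈ Rt, 0 < (inner ℝ β γ : ℝ) → β - γ ∈ Rt ∨ β - γ = 0)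
    (hf : ∀ β ∈ Rt, f β ≠ 0) {α γ : V} (hα : α ∈ Rt)
    (hαsimple : ¬∃ β ∈ positiveRoots Rt f, ∃ γ ∈ positiveRoots Rt f, α = β + γ)
    (hγ : γ ∈ positiveRoots Rt f) (hαγ : 0 < ⟪α, γ⟫) :
    γ - α ∈ positiveRoots Rt f ∨ γ - α = 0 := by
  rcases sub_mem_positiveRoots_or_sub_eq_zero_or_sub_mem hneg hcrys hf hα hγ.1 hαγ with h | h | h
  · exact absurd ⟨α - γ, h, γ, hγ, (sub_add_cancel α γ).symm⟩ hαsimple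
  · exact Or.inr (by rw [← neg_sub, h, neg_zero])
  · exact Or.inl h

theorem inner_pos_of_add_sum_eq_add {x a b : V} (S : Finset ι) (y : ι → V)
    (h : x + ∑ i ∈ S, y i = a + b) (hab : a + b ≠ 0) :
    (0 < ⟪x, a⟫ ∨ ∃ i ∈ S, 0 < ⟪y i, a⟫) ∨ (0 < ⟪x, b⟫ ∨ ∃ i ∈ S, 0 < ⟪y i, b⟫) := by
  by_contra hneg
  push Not at hneg
  obtain ⟨⟨hxa, hya⟩, hxb, hyb⟩ := hneg
  have hexpand : ⟪x + ∑ i ∈ S, y i, a + b⟫ =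
      ⟪x, a⟫ + ∑ i ∈ S, ⟪y i, a⟫ + (⟪x, b⟫ + ∑ i ∈ S, ⟪y i, b⟫) := by
    simp only [inner_add_left, sum_inner, inner_add_right]
  rw [h] at hexpand
  have hnonpos : ⟪a + b, a + b⟫ ≤ 0 := by
    rw [hexpand]
    linarith [Finset.sum_nonpos hya, Finset.sum_nonpos hyb]
  exact hab (real_inner_self_nonpos.mp hnonpos)

theorem exists_subset_sum_sub_mem_positiveRoots_or_eq_zero (hneg : ∀ β ∈ Rt, -β ∈ Rt)
    (hcrys : ∀ β ∈ Rt, ∀ γ ∈ Rt, 0 < (inner ℝ β γ : ℝ) → β - γ ∈ Rt ∨ β - γ = 0)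
    (hf : ∀ β ∈ Rt, f β ≠ 0) {α : V} (hα : α ∈ Rt)
    (hαsimple : ¬∃ β ∈ positiveRoots Rt f, ∃ γ ∈ positiveRoots Rt f, α = β + γ)
    (β : ι → V) (S : Finset ι) (hβ : ∀ i ∈ S, β i ∈ positiveRoots Rt f) {γ₀ γ₁ : V}
    (hγ₀ : γ₀ ∈ positiveRoots Rt f) (hγ₁ : γ₁ ∈ positiveRoots Rt f)
    (heq : α + ∑ i ∈ S, β i = γ₀ + γ₁) :
    ∃ s ⊆ S, ∃ t ∈ ({γ₀, γ₁} : Set V),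
      (∑ i ∈ s, β i) - t ∈ positiveRoots Rt f ∨ (∑ i ∈ s, β i) - t = 0 := by
  classical
  induction S using Finset.strongInduction generalizing γ₀ γ₁ with
  | H S ih =>
  wlog hpos : 0 < ⟪α, γ₀⟫ ∨ ∃ i ∈ S, 0 < ⟪β i, γ₀⟫ generalizing γ₀ γ₁ with hsymm
  · have hne : γ₀ + γ₁ ≠ 0 := fun h0 => by
      have := congrArg f h0
      rw [map_add, map_zero] at this
      linarith [hγ₀.2, hγ₁.2]
    have hpos₁ := (inner_pos_of_add_sum_eq_add S β heq hne).resolve_left hpos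
    simpa only [Set.pair_comm] using hsymm hγ₁ hγ₀ (heq.trans (add_comm _ _)) hpos₁
  rcases hpos with hαγ | ⟨i, hi, hβγ⟩
  · have hdiff : (∑ i ∈ S, β i) - γ₁ = γ₀ - α := by
      rw [sub_eq_sub_iff_add_eq_add, add_comm, heq]
    refine ⟨S, subset_rfl, γ₁, by simp, ?_⟩
    rw [hdiff]
    exact sub_mem_positiveRoots_or_sub_eq_zero_of_simple hneg hcrys hf hα hαsimple hγ₀ hαγ
  rcases sub_mem_positiveRoots_or_sub_eq_zero_or_sub_mem hneg hcrys hf (hβ i hi).1 hγ₀.1 hβγ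
    with h | h | h
  · exact ⟨{i}, by simpa using hi, γ₀, by simp, by simpa using Or.inl h⟩
  · exact ⟨{i}, by simpa using hi, γ₀, by simp, by simpa using Or.inr h⟩
  have heq' : α + ∑ j ∈ S.erase i, β j = (γ₀ - β i) + γ₁ := by
    rw [← Finset.add_sum_erase S β hi] at heq
    rw [sub_add_eq_add_sub, eq_sub_iff_add_eq, ← heq]
    abel
  obtain ⟨s, hs, t, ht, hst⟩ := ih (S.erase i) (Finset.erase_ssubset hi)
    (fun j hj => hβ j (Finset.mem_of_mem_erase hj)) h hγ₁ heq'
  have hsS : s ⊆ S := hs.trans (S.erase_subset i)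
  rcases ht with rfl | rfl
  · have his : i ∉ s := fun h => S.notMem_erase i (hs h)
    refine ⟨insert i s, Finset.insert_subset hi hsS, γ₀, by simp, ?_⟩
    rwa [Finset.sum_insert his, show β i + ∑ j ∈ s, β j - γ₀ = ∑ j ∈ s, β j - (γ₀ - β i) by
      abel]
  · exact ⟨s, hsS, t, by simp, hst⟩

end

theorem simple_root_sum_split_general {V : Type*} [NormedAddCommGroup V] [InnerProductSpace ℝ V]
    (Rt : Set V)
    (hneg : ∀ β ∈ Rt, -β ∈ Rt)
    (hcrys : ∀ β ∈ Rt, ∀ γ ∈ Rt, 0 < (inner ℝ β γ : ℝ) → β - γ ∈ Rt ∨ β - γ = 0)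
    (f : V →ₗ[ℝ] ℝ) (hf : ∀ β ∈ Rt, f β ≠ 0)
    (P : Set V) (hP : P = {β ∈ Rt | 0 < f β})
    (α : V) (hα : α ∈ P) (hαsimple : ¬∃ β ∈ P, ∃ γ ∈ P, α = β + γ)
    (m : ℕ) (β : Fin m → V) (hβ : ∀ i, β i ∈ P)
    (γ₀ γ₁ : V) (hγ₀ : γ₀ ∈ P) (hγ₁ : γ₁ ∈ P)
    (heq : α + ∑ i, β i = γ₀ + γ₁) :
    ∃ s : Finset (Fin m), ∃ t ∈ ({γ₀, γ₁} : Set V),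
      (∑ i ∈ s, β i) - t ∈ P ∨ (∑ i ∈ s, β i) - t = 0 := by
  subst hP
  obtain ⟨s, -, t, ht, hst⟩ := exists_subset_sum_sub_mem_positiveRoots_or_eq_zero hneg hcrys hf hα.1
    hαsimple β Finset.univ (fun i _ => hβ i) hγ₀ hγ₁ heq
  exact ⟨s, t, ht, hst⟩

/-- If `α` is a simple root, `β₁, …, β_m` (`m ≥ 1`) and `γ₀, γ₁` are positive
roots with `α + ∑ βᵢ = γ₀ + γ₁` a positive root, then for some subset of indices and some
`t ∈ {γ₀, γ₁}`, the expression `∑_{j ∈ subset} βⱼ - t` is a positive root or zero.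
A simple root is a positive root which is not the sum of two positive roots. -/
theorem simple_root_sum_split {V : Type*} [NormedAddCommGroup V] [InnerProductSpace ℝ V]
    (Rt : Set V) (h0 : (0 : V) ∉ Rt)
    (hneg : ∀ β ∈ Rt, -β ∈ Rt)
    (hcrys : ∀ β ∈ Rt, ∀ γ ∈ Rt, 0 < (inner ℝ β γ : ℝ) → β - γ ∈ Rt ∨ β - γ = 0)
    (f : V →ₗ[ℝ] ℝ) (hf : ∀ β ∈ Rt, f β ≠ 0)
    (P : Set V) (hP : P = {β ∈ Rt | 0 < f β})
    (α : V) (hα : α ∈ P) (hαsimple : ¬∃ β ∈ P, ∃ γ ∈ P, α = β + γ)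
    (m : ℕ) (hm : 1 ≤ m) (β : Fin m → V) (hβ : ∀ i, β i ∈ P)
    (γ₀ γ₁ : V) (hγ₀ : γ₀ ∈ P) (hγ₁ : γ₁ ∈ P)
    (heq : α + ∑ i, β i = γ₀ + γ₁) (hsum : (α + ∑ i, β i) ∈ P) :
    ∃ s : Finset (Fin m), ∃ t ∈ ({γ₀, γ₁} : Set V),
      (∑ i ∈ s, β i) - t ∈ P ∨ (∑ i ∈ s, β i) - t = 0 :=
  simple_root_sum_split_general Rt hneg hcrys f hf P hP α hα hαsimple m β hβ γ₀ γ₁ hγ₀ hγ₁ heq
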